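/- arXiv:1203.3233 — 5 statements merged into one kernel-verified Lean document; each statement's English description precedes it below -/
import Mathlib

section
/- For every integer p ≥ 0 and all real numbers z with 0 ≤ z < 1, the inequality (1+z)(1 - z^{2p+2}) - 2z(1 - (p+1)z^{2p} + p z^{2p+2}) > 0 holds. -/
theorem one_add_mul_one_sub_pow_sub_two_mul_eq {R : Type*} [CommRing R] (p : ℕ) (z : R) :
    (1 + z) * (1 - z ^ (2 * p + 2))
      - 2 * z * (1 - ((p : R) + 1) * z ^ (2 * p) + (p : R) * z ^ (2 * p + 2))
      = (1 - z) * (1 + (2 * (p : R) + 2) * z ^ (2 * p + 1)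
          + (2 * (p : R) + 1) * z ^ (2 * p + 2)) := by
  ring

/-- For every integer `p ≥ 0` and all real `z` with `0 ≤ z < 1`,
`(1+z)(1 - z^{2p+2}) - 2z(1 - (p+1)z^{2p} + p z^{2p+2}) > 0`. -/
theorem stmt1 (p : ℕ) (z : ℝ) (h0 : 0 ≤ z) (h1 : z < 1) :
    0 < (1 + z) * (1 - z ^ (2 * p + 2))
      - 2 * z * (1 - ((p : ℝ) + 1) * z ^ (2 * p) + (p : ℝ) * z ^ (2 * p + 2)) := by
  rw [one_add_mul_one_sub_pow_sub_two_mul_eq]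
  exact mul_pos (sub_pos.2 h1) (by positivity)
end

section
/- Let p ≥ 0 be an integer and define B(λ,μ) = (λ^{p+1} - μ^{p+1})/(λ - μ) for λ ≠ μ and B(λ,λ) = (p+1)λ^p. Then the infimum over λ ≥ 0, μ ≥ 0 with λ² + μ² = 1 of B(λ,μ) + 2 ∂_λ B(λ,μ)·(λ ± √(λμ)) is strictly positive (for either choice of sign). -/
/-!
Expanding `B(λ,μ) = ∑ λ^i μ^(p-i)` and differentiating `(λ - μ) B(λ,μ) = λ^(p+1) - μ^(p+1)` in `λ`
gives `B = (p+1) λ^p + ∂_λB · (μ - λ)`, so the expression equals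
`(p+1) λ^p + ∂_λB · (√μ ± √λ)²`, a sum of two nonnegative terms. On the quarter circle either
`λ ≥ 1/2`, and the first term is at least `2^(-p)`, or `μ - λ ≥ 1/3`; then `∂_λB ≥ μ^(p-1)` and
`(√μ ± √λ)² ≥ (μ - λ)²/4` bound the second term from below.
-/

/-- The divided difference `B(λ,μ)` of `V(λ) = λ^{p+1}`:
`B(λ,μ) = (λ^{p+1} - μ^{p+1})/(λ - μ)` for `λ ≠ μ`, and `B(λ,λ) = (p+1)λ^p`. -/
noncomputable def dividedDiffPow (p : ℕ) (l m : ℝ) : ℝ :=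
  if l = m then ((p : ℝ) + 1) * l ^ p else (l ^ (p + 1) - m ^ (p + 1)) / (l - m)

open Finset Real

lemma dividedDiffPow_eq_sum (p : ℕ) (l m : ℝ) :
    dividedDiffPow p l m = ∑ i ∈ range (p + 1), l ^ i * m ^ (p - i) := by
  unfold dividedDiffPow
  split_ifs with h
  · subst h
    have : ∀ i ∈ range (p + 1), l ^ i * l ^ (p - i) = l ^ p := fun i hi => by
      rw [← pow_add, Nat.add_sub_cancel' (Nat.lt_succ_iff.mp (mem_range.mp hi))]
    simp [sum_congr rfl this]
  · rw [div_eq_iff (sub_ne_zero.mpr h)]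
    simpa using (geom_sum₂_mul l m (p + 1)).symm

noncomputable def dividedDiffPowDeriv (p : ℕ) (l m : ℝ) : ℝ :=
  ∑ i ∈ range (p + 1), (i : ℝ) * l ^ (i - 1) * m ^ (p - i)

lemma hasDerivAt_dividedDiffPow (p : ℕ) (l m : ℝ) :
    HasDerivAt (fun x => dividedDiffPow p x m) (dividedDiffPowDeriv p l m) l := by
  simp only [dividedDiffPow_eq_sum]
  exact HasDerivAt.fun_sum fun i _ => (hasDerivAt_pow i l).mul_const _

lemma dividedDiffPow_add_sub_mul_deriv (p : ℕ) (l m : ℝ) :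
    dividedDiffPow p l m + (l - m) * dividedDiffPowDeriv p l m = (p + 1) * l ^ p := by
  have hprod : HasDerivAt (fun x => (x - m) * dividedDiffPow p x m)
      (1 * dividedDiffPow p l m + (l - m) * dividedDiffPowDeriv p l m) l :=
    ((hasDerivAt_id l).sub_const m).mul (hasDerivAt_dividedDiffPow p l m)
  have hfun :
      (fun x => (x - m) * dividedDiffPow p x m) = fun x => x ^ (p + 1) - m ^ (p + 1) := by
    funext x
    rw [dividedDiffPow_eq_sum, mul_comm]
    simpa using geom_sum₂_mul x m (p + 1)
  rw [hfun] at hprod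
  have := hprod.unique ((hasDerivAt_pow (p + 1) l).sub_const _)
  push_cast at this
  linarith

lemma dividedDiffPowDeriv_nonneg (p : ℕ) {l m : ℝ} (hl : 0 ≤ l) (hm : 0 ≤ m) :
    0 ≤ dividedDiffPowDeriv p l m :=
  sum_nonneg fun _ _ => by positivity

lemma pow_pred_le_dividedDiffPowDeriv {p : ℕ} (hp : p ≠ 0) {l m : ℝ} (hl : 0 ≤ l) (hm : 0 ≤ m) :
    m ^ (p - 1) ≤ dividedDiffPowDeriv p l m := by
  have h1 : 1 ∈ range (p + 1) := mem_range.mpr (by omega)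
  simpa [dividedDiffPowDeriv] using single_le_sum (fun i _ => by positivity) h1
    (f := fun i : ℕ => (i : ℝ) * l ^ (i - 1) * m ^ (p - i)) (s := range (p + 1))

lemma dividedDiffPow_add_two_mul_deriv_mul {s : ℝ} (hs : s ^ 2 = 1) (p : ℕ) {l m : ℝ}
    (hl : 0 ≤ l) (hm : 0 ≤ m) :
    dividedDiffPow p l m + 2 * dividedDiffPowDeriv p l m * (l + s * √(l * m))
      = (p + 1) * l ^ p + dividedDiffPowDeriv p l m * (√m + s * √l) ^ 2 := by
  have hB := dividedDiffPow_add_sub_mul_deriv p l m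
  rw [sqrt_mul hl]
  linear_combination hB - dividedDiffPowDeriv p l m * (sq_sqrt hm + s ^ 2 * sq_sqrt hl + l * hs)

lemma sq_sub_le_two_mul_add_mul_sq_sqrt_add {s : ℝ} (hs : s = 1 ∨ s = -1) {l m : ℝ}
    (hl : 0 ≤ l) (hm : 0 ≤ m) :
    (m - l) ^ 2 ≤ 2 * (l + m) * (√m + s * √l) ^ 2 := by
  have hdiff : (m - l) ^ 2 = (√m - √l) ^ 2 * (√m + √l) ^ 2 := by
    rw [← mul_pow]
    congr 1
    linear_combination sq_sqrt hl - sq_sqrt hm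
  have hsum : (√m + √l) ^ 2 ≤ 2 * (l + m) := by
    nlinarith [sq_nonneg (√m - √l), sq_sqrt hl, sq_sqrt hm]
  have hsign : (√m - √l) ^ 2 ≤ (√m + s * √l) ^ 2 := by
    rcases hs with rfl | rfl
    · nlinarith [sqrt_nonneg l, sqrt_nonneg m]
    · exact le_of_eq (by ring)
  rw [hdiff]
  calc _ ≤ (√m - √l) ^ 2 * (2 * (l + m)) := by gcongr
    _ ≤ _ := by rw [mul_comm]; gcongr

lemma half_pow_div_le_of_sq_add_sq_eq_one (p : ℕ) {s : ℝ} (hs : s = 1 ∨ s = -1) {l m : ℝ}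
    (hl : 0 ≤ l) (hm : 0 ≤ m) (hlm : l ^ 2 + m ^ 2 = 1) :
    (1 / 2) ^ p / 36 ≤ (p + 1) * l ^ p + dividedDiffPowDeriv p l m * (√m + s * √l) ^ 2 := by
  have hsquare : 0 ≤ dividedDiffPowDeriv p l m * (√m + s * √l) ^ 2 :=
    mul_nonneg (dividedDiffPowDeriv_nonneg p hl hm) (sq_nonneg _)
  rcases le_or_gt (1 / 2) l with hl_half | hl_half
  · have : (1 / 2 : ℝ) ^ p ≤ l ^ p := pow_le_pow_left₀ (by norm_num) hl_half p
    nlinarith [pow_nonneg hl p, (Nat.cast_nonneg p : (0 : ℝ) ≤ p)]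
  rcases eq_or_ne p 0 with rfl | hp
  · norm_num
    linarith
  have hm_big : 5 / 6 ≤ m := by nlinarith
  have hD : (1 / 2 : ℝ) ^ p ≤ dividedDiffPowDeriv p l m :=
    calc (1 / 2 : ℝ) ^ p ≤ (1 / 2) ^ (p - 1) :=
          pow_le_pow_of_le_one (by norm_num) (by norm_num) (p.sub_le 1)
      _ ≤ m ^ (p - 1) := pow_le_pow_left₀ (by norm_num) (by linarith) _
      _ ≤ _ := pow_pred_le_dividedDiffPowDeriv hp hl hm
  have hgap : 1 / 36 ≤ (√m + s * √l) ^ 2 := by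
    nlinarith [sq_sub_le_two_mul_add_mul_sq_sqrt_add hs hl hm, sq_nonneg (√m + s * √l)]
  calc (1 / 2 : ℝ) ^ p / 36 = (1 / 2) ^ p * (1 / 36) := by ring
    _ ≤ dividedDiffPowDeriv p l m * (√m + s * √l) ^ 2 :=
      mul_le_mul hD hgap (by norm_num) (dividedDiffPowDeriv_nonneg p hl hm)
    _ ≤ _ := le_add_of_nonneg_left (by positivity)

/-- For either choice of sign, the infimum over `λ, μ ≥ 0` with `λ² + μ² = 1` of
`B(λ,μ) + 2 ∂_λ B(λ,μ)·(λ ± √(λμ))` is strictly positive. -/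
theorem stmt2 (p : ℕ) (sgn : ℝ) (hsgn : sgn = 1 ∨ sgn = -1) :
    ∃ c > (0 : ℝ), ∀ l m : ℝ, 0 ≤ l → 0 ≤ m → l ^ 2 + m ^ 2 = 1 →
      c ≤ dividedDiffPow p l m
        + 2 * deriv (fun x => dividedDiffPow p x m) l * (l + sgn * Real.sqrt (l * m)) := by
  refine ⟨(1 / 2) ^ p / 36, by positivity, fun l m hl hm hlm => ?_⟩
  have hsgn_sq : sgn ^ 2 = 1 := by rcases hsgn with rfl | rfl <;> norm_num
  rw [(hasDerivAt_dividedDiffPow p l m).deriv, dividedDiffPow_add_two_mul_deriv_mul hsgn_sq p hl hm]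
  exact half_pow_div_le_of_sq_add_sq_eq_one p hsgn hl hm hlm
end

section
/- Let a(ξ,ω) = (2 + τ²m²) cos ω − (2/n) Σ_{j=1}^n cos ξ_j with τ, m > 0. If ω ∈ ℂ has Im ω ≠ 0 and Re ω ∉ {0, π}, then Im a(ξ,ω) ≠ 0 for all ξ ∈ 𝕋ⁿ; if Re ω ∈ {0, π} and Im ω ≠ 0, then |Re a(ξ,ω)| ≥ τ²m². In particular a(ξ,ω) ≠ 0 for all ξ ∈ 𝕋ⁿ whenever ω ∈ ℂ \ ℝ. -/
/-!
Write `a(ξ,ω) = A cos ω − c(ξ)` with `A = 2 + τ²m²` and `c(ξ) = (2/n) Σ cos ξ_j` real,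
`|c(ξ)| ≤ 2`. At `ω = x + iy` the imaginary part `−A sin x sinh y` vanishes only when
`x ∈ πℤ` or `y = 0`. For `x ∈ πℤ` and `y ≠ 0` the real part is `± A cosh y − c(ξ)`, of modulus at least `A cosh y − 2 > A − 2 = τ²m²`.
-/

open Complex

namespace Complex

theorem cos_re (z : ℂ) : (cos z).re = Real.cos z.re * Real.cosh z.im := by
  rw [cos_eq]
  simp [← ofReal_cos, ← ofReal_cosh, ← ofReal_sin, ← ofReal_sinh]

theorem cos_im (z : ℂ) : (cos z).im = -(Real.sin z.re * Real.sinh z.im) := by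
  rw [cos_eq]
  simp [← ofReal_cos, ← ofReal_cosh, ← ofReal_sin, ← ofReal_sinh]

end Complex

theorem abs_two_div_card_mul_sum_cos_le {ι : Type*} [Fintype ι] (ξ : ι → ℝ) :
    |2 / (Fintype.card ι : ℝ) * ∑ i, Real.cos (ξ i)| ≤ 2 := by
  rcases Nat.eq_zero_or_pos (Fintype.card ι) with hι | hι
  · simp [hι]
  have hsum : |∑ i, Real.cos (ξ i)| ≤ Fintype.card ι :=
    calc |∑ i, Real.cos (ξ i)| ≤ ∑ i, |Real.cos (ξ i)| := Finset.abs_sum_le_sum_abs _ _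
      _ ≤ ∑ _i : ι, (1 : ℝ) := Finset.sum_le_sum fun i _ => Real.abs_cos_le_one _
      _ = Fintype.card ι := by simp
  have hcard : (0 : ℝ) < Fintype.card ι := by exact_mod_cast hι
  rw [abs_mul, abs_of_pos (by positivity), div_mul_eq_mul_div, div_le_iff₀ hcard]
  gcongr

theorem im_ofReal_mul_cos_sub_ofReal_ne_zero {A : ℝ} (hA : A ≠ 0) (c : ℝ) {z : ℂ}
    (hz_im : z.im ≠ 0) (hz_re : ∀ k : ℤ, z.re ≠ k * Real.pi) :
    ((A : ℂ) * cos z - c).im ≠ 0 := by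
  have hsin : Real.sin z.re ≠ 0 := fun h =>
    let ⟨k, hk⟩ := Real.sin_eq_zero_iff.mp h
    hz_re k hk.symm
  have hsinh : Real.sinh z.im ≠ 0 := fun h => hz_im (Real.sinh_eq_zero.mp h)
  simp [cos_im, hA, hsin, hsinh]

theorem abs_sub_abs_lt_abs_re_ofReal_mul_cos_sub_ofReal {A : ℝ} (hA : A ≠ 0) (c : ℝ) {z : ℂ}
    (hz_im : z.im ≠ 0) (hz_re : ∃ k : ℤ, z.re = k * Real.pi) :
    |A| - |c| < |((A : ℂ) * cos z - c).re| := by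
  obtain ⟨k, hk⟩ := hz_re
  have hre : ((A : ℂ) * cos z - c).re = A * (Real.cos z.re * Real.cosh z.im) - c := by
    simp [cos_re]
  have habs : |A * (Real.cos z.re * Real.cosh z.im)| = |A| * Real.cosh z.im := by
    rw [abs_mul, abs_mul, hk, Real.abs_cos_int_mul_pi, one_mul,
      abs_of_pos (Real.cosh_pos _)]
  calc |A| - |c| < |A| * Real.cosh z.im - |c| := by
        have := Real.one_lt_cosh.mpr hz_im
        gcongr
        exact lt_mul_of_one_lt_right (abs_pos.mpr hA) this
    _ = |A * (Real.cos z.re * Real.cosh z.im)| - |c| := by rw [habs]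
    _ ≤ |((A : ℂ) * cos z - c).re| := hre ▸ abs_sub_abs_le_abs_sub _ _

theorem stmt9_general (n : ℕ) (τ m : ℝ) (ω : ℂ) :
    (ω.im ≠ 0 → (∀ k : ℤ, ω.re ≠ k * Real.pi) → ∀ ξ : Fin n → ℝ,
        (((2 : ℂ) + (τ : ℂ) ^ 2 * (m : ℂ) ^ 2) * Complex.cos ω
          - (2 / (n : ℂ)) * ∑ j, Complex.cos (ξ j : ℂ)).im ≠ 0)
    ∧ (ω.im ≠ 0 → (∃ k : ℤ, ω.re = k * Real.pi) → ∀ ξ : Fin n → ℝ,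
        τ ^ 2 * m ^ 2 ≤
          |(((2 : ℂ) + (τ : ℂ) ^ 2 * (m : ℂ) ^ 2) * Complex.cos ω
            - (2 / (n : ℂ)) * ∑ j, Complex.cos (ξ j : ℂ)).re|)
    ∧ (ω.im ≠ 0 → ∀ ξ : Fin n → ℝ,
        ((2 : ℂ) + (τ : ℂ) ^ 2 * (m : ℂ) ^ 2) * Complex.cos ω
          - (2 / (n : ℂ)) * ∑ j, Complex.cos (ξ j : ℂ) ≠ 0) := by
  set A : ℝ := 2 + τ ^ 2 * m ^ 2
  have hA : 0 < A := by positivity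
  have hsymbol : ∀ ξ : Fin n → ℝ,
      ((2 : ℂ) + (τ : ℂ) ^ 2 * (m : ℂ) ^ 2) * Complex.cos ω
          - (2 / (n : ℂ)) * ∑ j, Complex.cos (ξ j : ℂ)
        = (A : ℂ) * cos ω - ((2 / n * ∑ j, Real.cos (ξ j) : ℝ) : ℂ) := by
    intro ξ
    push_cast [A, ofReal_cos]
    ring
  have hre_bound : ω.im ≠ 0 → (∃ k : ℤ, ω.re = k * Real.pi) → ∀ ξ : Fin n → ℝ,
      τ ^ 2 * m ^ 2 < |((A : ℂ) * cos ω - ((2 / n * ∑ j, Real.cos (ξ j) : ℝ) : ℂ)).re| := by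
    intro hω_im hω_re ξ
    have hc := abs_two_div_card_mul_sum_cos_le ξ
    rw [Fintype.card_fin] at hc
    have := abs_sub_abs_lt_abs_re_ofReal_mul_cos_sub_ofReal hA.ne'
      (2 / n * ∑ j, Real.cos (ξ j)) hω_im hω_re
    rw [abs_of_pos hA] at this
    linarith
  refine ⟨fun hω_im hω_re ξ => ?_, fun hω_im hω_re ξ => ?_, fun hω_im ξ => ?_⟩ <;> rw [hsymbol]
  · exact im_ofReal_mul_cos_sub_ofReal_ne_zero hA.ne' _ hω_im hω_re
  · exact (hre_bound hω_im hω_re ξ).le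
  · intro h
    by_cases hω_re : ∃ k : ℤ, ω.re = k * Real.pi
    · have := hre_bound hω_im hω_re ξ
      rw [h, zero_re, abs_zero] at this
      exact not_lt.mpr (by positivity) this
    · push Not at hω_re
      exact im_ofReal_mul_cos_sub_ofReal_ne_zero hA.ne' _ hω_im hω_re (by rw [h, zero_im])

/-- Non-vanishing of the symbol `a(ξ,ω) = (2+τ²m²) cos ω − (2/n) Σ_j cos ξ_j` for
non-real `ω`: if `Im ω ≠ 0` and `Re ω ∉ {0, π}` (mod 2π, i.e. `Re ω ∉ πℤ`) then
`Im a(ξ,ω) ≠ 0`; if `Re ω ∈ πℤ` and `Im ω ≠ 0` then `|Re a(ξ,ω)| ≥ τ²m²`;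
in particular `a(ξ,ω) ≠ 0` for all `ξ ∈ 𝕋ⁿ` whenever `ω ∈ ℂ \ ℝ`. -/
theorem stmt9 (n : ℕ) (hn : 0 < n) (τ m : ℝ) (hτ : 0 < τ) (hm : 0 < m) (ω : ℂ) :
    (ω.im ≠ 0 → (∀ k : ℤ, ω.re ≠ k * Real.pi) → ∀ ξ : Fin n → ℝ,
        (((2 : ℂ) + (τ : ℂ) ^ 2 * (m : ℂ) ^ 2) * Complex.cos ω
          - (2 / (n : ℂ)) * ∑ j, Complex.cos (ξ j : ℂ)).im ≠ 0)
    ∧ (ω.im ≠ 0 → (∃ k : ℤ, ω.re = k * Real.pi) → ∀ ξ : Fin n → ℝ,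
        τ ^ 2 * m ^ 2 ≤
          |(((2 : ℂ) + (τ : ℂ) ^ 2 * (m : ℂ) ^ 2) * Complex.cos ω
            - (2 / (n : ℂ)) * ∑ j, Complex.cos (ξ j : ℂ)).re|)
    ∧ (ω.im ≠ 0 → ∀ ξ : Fin n → ℝ,
        ((2 : ℂ) + (τ : ℂ) ^ 2 * (m : ℂ) ^ 2) * Complex.cos ω
          - (2 / (n : ℂ)) * ∑ j, Complex.cos (ξ j : ℂ) ≠ 0) :=
  stmt9_general n τ m ω
end

section
/- Let ω_m = arccos((1+τ²m²/2)^{-1}) and a(ξ,ω) = (2+τ²m²)cos ω − (2/n)Σ_{j=1}^n cos ξ_j. For 1 ≤ n ≤ 4, the function ξ ↦ 1/a(ξ,ω) belongs to L²(𝕋ⁿ) if and only if ω ∈ (−ω_m, ω_m) ∪ (π−ω_m, π+ω_m). -/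
/-!
Write `K = (2 + τ²m²) cos ω`. Since `|(2/n) ∑ cos ξⱼ| ≤ 2`, the symbol `K - (2/n) ∑ cos ξⱼ` is
bounded away from zero when `|K| > 2`, which is the gap condition. When `|K| < 2` it vanishes
transversally on a hypersurface: in the first coordinate, for the other coordinates in an open
set, it has a simple zero, so the square of its inverse has non-integrable fibres and Fubini
forbids integrability. When `|K| = 2` it vanishes to second order at the single point
`θ = (θ, …, θ)`, `θ ∈ {π, 2π}`. On the cube `(θ - r 2⁻ᵏ, θ - r 2⁻ᵏ⁻¹]ⁿ` the inverse square is
at least of size `2^{4k}` on a set of volume of size `2^{-nk}`, so for `n ≤ 4` these disjoint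
cubes each contribute at least a fixed amount to the integral.
-/

open MeasureTheory Set Real Filter Asymptotics Function
open scoped ENNReal Topology

/-- The paper's `a(ξ, ω)`, with `K = (2 + τ²m²) cos ω`. -/
noncomputable def latticeSymbol (n : ℕ) (K : ℝ) (ξ : Fin n → ℝ) : ℝ :=
  K - (2 / n) * ∑ j, cos (ξ j)

def torusBox (n : ℕ) : Set (Fin n → ℝ) := univ.pi fun _ => Ioc 0 (2 * π)

theorem measurable_latticeSymbol (n : ℕ) (K : ℝ) : Measurable (latticeSymbol n K) := by
  unfold latticeSymbol; fun_prop

theorem abs_sub_two_le_abs_latticeSymbol (n : ℕ) (K : ℝ) (ξ : Fin n → ℝ) :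
    |K| - 2 ≤ |latticeSymbol n K ξ| := by
  have hsum : |∑ j, cos (ξ j)| ≤ n := by
    simpa using Finset.abs_sum_le_sum_abs (fun j => cos (ξ j)) Finset.univ |>.trans
      (Finset.sum_le_sum fun j _ => abs_cos_le_one (ξ j))
  have hmean : |(2 / n : ℝ) * ∑ j, cos (ξ j)| ≤ 2 := by
    rw [abs_mul, abs_of_nonneg (by positivity)]
    rcases Nat.eq_zero_or_pos n with rfl | hn
    · simp
    · calc (2 / n : ℝ) * |∑ j, cos (ξ j)| ≤ 2 / n * n := by gcongr
        _ = 2 := div_mul_cancel₀ _ (by positivity)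
  unfold latticeSymbol
  linarith [abs_sub_abs_le_abs_sub K ((2 / n : ℝ) * ∑ j, cos (ξ j))]

instance isFiniteMeasure_restrict_torusBox (n : ℕ) :
    IsFiniteMeasure (volume.restrict (torusBox n)) :=
  isFiniteMeasure_restrict.2
    (Bornology.IsBounded.pi fun _ => Metric.isBounded_Ioc _ _).measure_lt_top.ne

theorem memLp_inv_latticeSymbol_of_two_lt_abs {n : ℕ} {K : ℝ} (hK : 2 < |K|) :
    MemLp (fun ξ => (latticeSymbol n K ξ)⁻¹) 2 (volume.restrict (torusBox n)) := by
  refine MemLp.of_bound (measurable_latticeSymbol n K).inv.aestronglyMeasurable (|K| - 2)⁻¹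
    (ae_of_all _ fun ξ => ?_)
  rw [norm_inv, Real.norm_eq_abs]
  exact inv_anti₀ (by linarith) (abs_sub_two_le_abs_latticeSymbol n K ξ)

theorem lintegral_eq_top_of_le_setLIntegral {α : Type*} [MeasurableSpace α] {μ : Measure α}
    {s : Set α} {f : α → ℝ≥0∞} {A : ℕ → Set α} {c : ℝ≥0∞} (hA : ∀ k, MeasurableSet (A k))
    (hdisj : Pairwise (Disjoint on A)) (hAs : ∀ k, A k ⊆ s) (hc : c ≠ 0)
    (hle : ∀ k, c ≤ ∫⁻ x in A k, f x ∂μ) :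
    ∫⁻ x in s, f x ∂μ = ⊤ :=
  top_le_iff.1 <| calc
    ⊤ = ∑' _ : ℕ, c := (ENNReal.tsum_const_eq_top_of_ne_zero hc).symm
    _ ≤ ∑' k, ∫⁻ x in A k, f x ∂μ := ENNReal.tsum_le_tsum hle
    _ = ∫⁻ x in ⋃ k, A k, f x ∂μ := (lintegral_iUnion hA hdisj f).symm
    _ ≤ ∫⁻ x in s, f x ∂μ := lintegral_mono_set (iUnion_subset hAs)

section DyadicCube

variable {n : ℕ} {θ : Fin n → ℝ} {r : ℝ}

def dyadicCube (θ : Fin n → ℝ) (r : ℝ) (k : ℕ) : Set (Fin n → ℝ) :=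
  univ.pi fun j => Ioc (θ j - r / 2 ^ k) (θ j - r / 2 ^ (k + 1))

theorem measurableSet_dyadicCube (θ : Fin n → ℝ) (r : ℝ) (k : ℕ) :
    MeasurableSet (dyadicCube θ r k) :=
  MeasurableSet.univ_pi fun _ => measurableSet_Ioc

theorem dyadicCube_subset (hr : 0 < r) (k : ℕ) :
    dyadicCube θ r k ⊆ univ.pi fun j => Ioo (θ j - r) (θ j) := by
  intro ξ hξ j _
  obtain ⟨h₁, h₂⟩ := hξ j trivial
  have : r / 2 ^ k ≤ r := div_le_self hr.le (one_le_pow₀ one_le_two)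
  have : 0 < r / 2 ^ (k + 1) := by positivity
  constructor <;> linarith

theorem pairwise_disjoint_dyadicCube (hn : 0 < n) (hr : 0 < r) :
    Pairwise (Disjoint on dyadicCube θ r) := by
  let i₀ : Fin n := ⟨0, hn⟩
  have hmono : Monotone fun k : ℕ => θ i₀ - r / 2 ^ k := fun j k hjk => by
    simp only
    gcongr
    exact one_le_two
  have hsub : ∀ k, dyadicCube θ r k ⊆ eval i₀ ⁻¹' Ioc (θ i₀ - r / 2 ^ k) (θ i₀ - r / 2 ^ (k + 1)) :=
    fun k ξ hξ => hξ i₀ trivial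
  exact hmono.pairwise_disjoint_on_Ioc_succ.mono fun j k h =>
    (h.preimage (eval i₀)).mono (hsub j) (hsub k)

theorem norm_sub_le_of_mem_dyadicCube (hr : 0 < r) {k : ℕ} {ξ : Fin n → ℝ}
    (hξ : ξ ∈ dyadicCube θ r k) : ‖ξ - θ‖ ≤ r / 2 ^ k := by
  refine (pi_norm_le_iff_of_nonneg (by positivity)).2 fun j => ?_
  obtain ⟨h₁, h₂⟩ := hξ j trivial
  have : 0 < r / 2 ^ (k + 1) := by positivity
  rw [Pi.sub_apply, Real.norm_eq_abs, abs_le]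
  constructor <;> linarith

theorem volume_dyadicCube (hr : 0 < r) (k : ℕ) :
    volume (dyadicCube θ r k) = ENNReal.ofReal ((r / (2 * 2 ^ k)) ^ n) := by
  have hlen : ∀ j, θ j - r / 2 ^ (k + 1) - (θ j - r / 2 ^ k) = r / (2 * 2 ^ k) := fun j => by
    rw [pow_succ']; ring
  simp only [dyadicCube, volume_pi_pi, Real.volume_Ioc, hlen, Finset.prod_const,
    Finset.card_univ, Fintype.card_fin, ENNReal.ofReal_pow (by positivity : 0 ≤ r / (2 * 2 ^ k))]

theorem not_integrableOn_inv_sq_of_abs_le_norm_pow {p : ℕ} (hn : 0 < n) (hnp : n ≤ 2 * p)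
    (hr : 0 < r) {C : ℝ} (hC : 0 < C) {F : (Fin n → ℝ) → ℝ}
    (hF : ∀ ξ ∈ univ.pi fun j => Ioo (θ j - r) (θ j), F ξ ≠ 0 ∧ |F ξ| ≤ C * ‖ξ - θ‖ ^ p) :
    ¬ IntegrableOn (fun ξ => (F ξ)⁻¹ ^ 2) (univ.pi fun j => Ioc (θ j - r) (θ j)) := by
  intro hint
  have hbound : ∀ k, ∀ ξ ∈ dyadicCube θ r k, ((C * (r / 2 ^ k) ^ p) ^ 2)⁻¹ ≤ (F ξ)⁻¹ ^ 2 := by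
    intro k ξ hξ
    obtain ⟨hF0, hFle⟩ := hF ξ (dyadicCube_subset hr k hξ)
    rw [inv_pow, ← sq_abs (F ξ)]
    gcongr
    exact hFle.trans (by gcongr; exact norm_sub_le_of_mem_dyadicCube hr hξ)
  -- the cube `dyadicCube θ r k` contributes `≍ 2 ^ (k * (2 * p - n))`
  have hscale : ∀ k : ℕ, r ^ n / ((C * r ^ p) ^ 2 * 2 ^ n)
      ≤ ((C * (r / 2 ^ k) ^ p) ^ 2)⁻¹ * (r / (2 * 2 ^ k)) ^ n := by
    intro k
    have hgrow : (1 : ℝ) ≤ (2 ^ k) ^ (2 * p) / (2 ^ k) ^ n :=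
      (one_le_div (by positivity)).2 (pow_le_pow_right₀ (one_le_pow₀ one_le_two) hnp)
    calc r ^ n / ((C * r ^ p) ^ 2 * 2 ^ n)
        ≤ r ^ n / ((C * r ^ p) ^ 2 * 2 ^ n) * ((2 ^ k) ^ (2 * p) / (2 ^ k) ^ n) :=
          le_mul_of_one_le_right (by positivity) hgrow
      _ = ((C * (r / 2 ^ k) ^ p) ^ 2)⁻¹ * (r / (2 * 2 ^ k)) ^ n := by
          rw [div_pow, div_pow, mul_pow, mul_pow, mul_pow, ← pow_mul]
          field_simp
          ring
  refine (hint.lintegral_lt_top).ne (lintegral_eq_top_of_le_setLIntegral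
    (c := ENNReal.ofReal (r ^ n / ((C * r ^ p) ^ 2 * 2 ^ n)))
    (measurableSet_dyadicCube θ r) (pairwise_disjoint_dyadicCube hn hr)
    (fun k => (dyadicCube_subset hr k).trans (pi_mono fun _ _ => Ioo_subset_Ioc_self))
    (by simp only [ne_eq, ENNReal.ofReal_eq_zero, not_le]; positivity) fun k => ?_)
  calc ENNReal.ofReal (r ^ n / ((C * r ^ p) ^ 2 * 2 ^ n))
      ≤ ENNReal.ofReal ((C * (r / 2 ^ k) ^ p) ^ 2)⁻¹ * volume (dyadicCube θ r k) := by
        rw [volume_dyadicCube hr, ← ENNReal.ofReal_mul (by positivity)]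
        exact ENNReal.ofReal_le_ofReal (hscale k)
    _ = ∫⁻ _ in dyadicCube θ r k, ENNReal.ofReal ((C * (r / 2 ^ k) ^ p) ^ 2)⁻¹ :=
        (setLIntegral_const _ _).symm
    _ ≤ ∫⁻ ξ in dyadicCube θ r k, ENNReal.ofReal ((F ξ)⁻¹ ^ 2) :=
        setLIntegral_mono' (measurableSet_dyadicCube θ r k)
          fun ξ hξ => ENNReal.ofReal_le_ofReal (hbound k ξ hξ)

end DyadicCube

theorem cos_sub_cos_eq_of_sin_eq_zero {θ : ℝ} (hθ : sin θ = 0) (x : ℝ) :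
    cos θ - cos x = cos θ * (1 - cos (x - θ)) := by
  have : cos x = cos (x - θ) * cos θ := by
    conv_lhs => rw [← sub_add_cancel x θ]
    rw [cos_add, hθ, mul_zero, sub_zero]
  rw [this]; ring

theorem latticeSymbol_two_mul_cos_eq {n : ℕ} (hn : n ≠ 0) {θ : ℝ} (hθ : sin θ = 0) (ξ : Fin n → ℝ) :
    latticeSymbol n (2 * cos θ) ξ = 2 / n * cos θ * ∑ j, (1 - cos (ξ j - θ)) := by
  have hconst : 2 * cos θ = 2 / n * ∑ _j : Fin n, cos θ := by
    rw [Finset.sum_const, Finset.card_univ, Fintype.card_fin, nsmul_eq_mul]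
    field_simp
  rw [latticeSymbol, hconst, ← mul_sub, ← Finset.sum_sub_distrib, mul_assoc]
  simp_rw [cos_sub_cos_eq_of_sin_eq_zero hθ, ← Finset.mul_sum]

theorem abs_latticeSymbol_two_mul_cos_le {n : ℕ} (hn : n ≠ 0) {θ : ℝ} (hθ : sin θ = 0)
    (ξ : Fin n → ℝ) : |latticeSymbol n (2 * cos θ) ξ| ≤ ‖ξ - fun _ => θ‖ ^ 2 := by
  have hcos : |cos θ| = 1 := by
    rcases sin_eq_zero_iff_cos_eq.1 hθ with h | h <;> simp [h]
  have hterm : ∀ j, 0 ≤ 1 - cos (ξ j - θ) := fun j => sub_nonneg.2 (cos_le_one _)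
  have hbound : ∀ j, 1 - cos (ξ j - θ) ≤ ‖ξ - fun _ => θ‖ ^ 2 / 2 := by
    intro j
    have h := norm_le_pi_norm (ξ - fun _ => θ) j
    rw [Pi.sub_apply, Real.norm_eq_abs] at h
    have := one_sub_sq_div_two_le_cos (x := ξ j - θ)
    nlinarith [abs_nonneg (ξ j - θ), sq_abs (ξ j - θ)]
  rw [latticeSymbol_two_mul_cos_eq hn hθ, abs_mul, abs_mul, hcos, mul_one,
    abs_of_nonneg (by positivity), abs_of_nonneg (Finset.sum_nonneg fun j _ => hterm j)]
  calc 2 / n * ∑ j, (1 - cos (ξ j - θ)) ≤ 2 / n * ∑ _j : Fin n, ‖ξ - fun _ => θ‖ ^ 2 / 2 := by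
        gcongr with j; exact hbound j
    _ = ‖ξ - fun _ => θ‖ ^ 2 := by
        rw [Finset.sum_const, Finset.card_univ, Fintype.card_fin, nsmul_eq_mul]
        field_simp

theorem not_integrableOn_inv_latticeSymbol_sq_two_mul_cos {n : ℕ} (hn : 0 < n) (hn4 : n ≤ 4) {θ : ℝ}
    (hθ : sin θ = 0) (hπθ : π ≤ θ) (hθ2π : θ ≤ 2 * π) :
    ¬ IntegrableOn (fun ξ => (latticeSymbol n (2 * cos θ) ξ)⁻¹ ^ 2) (torusBox n) := by
  intro h
  refine not_integrableOn_inv_sq_of_abs_le_norm_pow hn (p := 2) (by omega) (θ := fun _ => θ)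
    pi_pos one_pos (fun ξ hξ => ⟨?_, ?_⟩)
    (h.mono_set (pi_mono fun _ _ => Ioc_subset_Ioc (by linarith) hθ2π))
  · have hpos : ∀ j, 0 < 1 - cos (ξ j - θ) := by
      intro j
      obtain ⟨h₁, h₂⟩ := hξ j trivial
      refine sub_pos.2 ((cos_le_one _).lt_of_ne fun h1 => ?_)
      have := (cos_eq_one_iff_of_lt_of_lt (by linarith [pi_pos]) (by linarith [pi_pos])).1 h1
      linarith
    have hcos : cos θ ≠ 0 := by
      rcases sin_eq_zero_iff_cos_eq.1 hθ with h | h <;> simp [h]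
    rw [latticeSymbol_two_mul_cos_eq hn.ne' hθ]
    exact mul_ne_zero (mul_ne_zero (by positivity) hcos)
      (Finset.sum_pos (fun j _ => hpos j) ⟨⟨0, hn⟩, Finset.mem_univ _⟩).ne'
  · rw [one_mul]
    exact abs_latticeSymbol_two_mul_cos_le hn.ne' hθ ξ

theorem not_integrableOn_inv_sq_sub_cos {b c : ℝ} (hb : |b| < 1) (hc : c ≠ 0) :
    ¬ IntegrableOn (fun x => (c * (b - cos x))⁻¹ ^ 2) (Ioc 0 (2 * π)) := by
  obtain ⟨hb₁, hb₂⟩ := abs_lt.1 hb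
  set θ := arccos b
  have hθ₀ : 0 < θ := arccos_pos.2 hb₂
  have hθπ : θ < π := arccos_lt_pi.2 hb₁
  have hcosθ : cos θ = b := cos_arccos hb₁.le hb₂.le
  have hbigO : (fun x => (x - θ)⁻¹) =O[𝓝[≠] θ] fun x => (c * (b - cos x))⁻¹ ^ 2 := by
    refine IsBigO.of_bound (c ^ 2) ?_
    have hnear : ∀ᶠ x in 𝓝 θ, x ∈ Ioo 0 π ∧ |x - θ| < 1 :=
      Filter.Eventually.and (Ioo_mem_nhds hθ₀ hθπ)
        ((isOpen_lt (by fun_prop) continuous_const).mem_nhds (by simp))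
    filter_upwards [nhdsWithin_le_nhds hnear, self_mem_nhdsWithin] with x ⟨hx, hx1⟩ hxθ
    have hu : 0 < |x - θ| := abs_pos.2 (sub_ne_zero.2 hxθ)
    have hv : 0 < |b - cos x| := by
      refine abs_pos.2 (sub_ne_zero.2 fun h => hxθ ?_)
      rw [← hcosθ] at h
      exact injOn_cos (Ioo_subset_Icc_self hx) ⟨hθ₀.le, hθπ.le⟩ h.symm
    have hvu : |b - cos x| ≤ |x - θ| := by
      rw [← hcosθ, abs_sub_comm x]; exact abs_cos_sub_cos_le θ x
    rw [norm_inv, norm_pow, norm_inv, norm_mul, Real.norm_eq_abs, Real.norm_eq_abs,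
      Real.norm_eq_abs, inv_pow, mul_pow, sq_abs, ← div_eq_mul_inv,
      div_mul_cancel_left₀ (pow_ne_zero 2 hc)]
    calc |x - θ|⁻¹ ≤ (|x - θ| ^ 2)⁻¹ := by
          gcongr
          nlinarith
      _ ≤ (|b - cos x| ^ 2)⁻¹ := by gcongr
  intro h
  refine not_intervalIntegrable_of_sub_inv_isBigO_punctured hbigO pi_pos.ne
    (Icc_subset_uIcc ⟨hθ₀.le, hθπ.le⟩) ?_
  exact (intervalIntegrable_iff_integrableOn_Ioc_of_le pi_pos.le).2
    (h.mono_set (Ioc_subset_Ioc_right (by linarith [pi_pos])))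

theorem not_integrable_prod_of_forall_not_integrable {α β E : Type*} [MeasurableSpace α]
    [MeasurableSpace β] [NormedAddCommGroup E] {μ : Measure α} {ν : Measure β} [SFinite μ]
    [SFinite ν] {f : α × β → E} {U : Set β} (hU : ν U ≠ 0)
    (hf : ∀ y ∈ U, ¬ Integrable (fun x => f (x, y)) μ) : ¬ Integrable f (μ.prod ν) := fun h =>
  let ⟨y, hyU, hy⟩ :=
    Measure.exists_mem_of_measure_ne_zero_of_ae hU (ae_restrict_of_ae h.prod_left_ae)
  hf y hyU hy

theorem integrableOn_univ_pi_succ_iff {N : ℕ} {E : Type*} [NormedAddCommGroup E]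
    (s : Fin (N + 1) → Set ℝ) {f : (Fin (N + 1) → ℝ) → E} :
    IntegrableOn f (univ.pi s) ↔ Integrable (fun p : ℝ × (Fin N → ℝ) => f (Fin.cons p.1 p.2))
      ((volume.restrict (s 0)).prod (volume.restrict (univ.pi fun i => s i.succ))) := by
  let e := MeasurableEquiv.piFinSuccAbove (fun _ : Fin (N + 1) => ℝ) 0
  have hpre : e.symm ⁻¹' univ.pi s = s 0 ×ˢ univ.pi fun i => s i.succ := by
    ext ⟨x, y⟩
    simp [e, Fin.forall_fin_succ]
  have he := ((volume_preserving_piFinSuccAbove (fun _ : Fin (N + 1) => ℝ) 0).symm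
    |>.restrict_preimage_emb e.symm.measurableEmbedding (univ.pi s))
  rw [hpre, Measure.volume_eq_prod, ← Measure.prod_restrict] at he
  rw [IntegrableOn, ← he.integrable_comp_emb e.symm.measurableEmbedding]
  congr! 1
  ext p
  simp only [comp_apply, MeasurableEquiv.piFinSuccAbove_symm_apply, Fin.insertNthEquiv_zero]
  rfl

theorem latticeSymbol_cons (N : ℕ) (K x : ℝ) (y : Fin N → ℝ) :
    latticeSymbol (N + 1) K (Fin.cons x y) =
      2 / (N + 1) * ((N + 1) / 2 * K - ∑ j, cos (y j) - cos x) := by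
  rw [latticeSymbol, Fin.sum_univ_succ]
  simp only [Fin.cons_zero, Fin.cons_succ]
  push_cast
  field_simp
  ring

theorem not_integrableOn_inv_latticeSymbol_sq_of_abs_lt_two (N : ℕ) {K : ℝ} (hK : |K| < 2) :
    ¬ IntegrableOn (fun ξ => (latticeSymbol (N + 1) K ξ)⁻¹ ^ 2) (torusBox (N + 1)) := by
  obtain ⟨hK₁, hK₂⟩ := abs_lt.1 hK
  let U : Set (Fin N → ℝ) := (univ.pi fun _ => Ioo 0 (2 * π)) ∩
    {y | |(N + 1) / 2 * K - ∑ j, cos (y j)| < 1}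
  have hUopen : IsOpen U := (isOpen_set_pi finite_univ fun _ _ => isOpen_Ioo).inter
    (isOpen_lt (by fun_prop) continuous_const)
  have hUne : (fun _ => arccos (K / 2)) ∈ U := by
    refine ⟨fun _ _ => ⟨arccos_pos.2 (by linarith), by linarith [arccos_le_pi (K / 2), pi_pos]⟩, ?_⟩
    have hcos : cos (arccos (K / 2)) = K / 2 := cos_arccos (by linarith) (by linarith)
    simp only [mem_ofPred_eq, hcos, Finset.sum_const, Finset.card_univ, Fintype.card_fin,
      nsmul_eq_mul]
    rw [show (N + 1) / 2 * K - N * (K / 2) = K / 2 by ring, abs_div, abs_two]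
    linarith
  have hUsub : U ⊆ univ.pi fun _ => Ioc 0 (2 * π) :=
    fun y hy j _ => Ioo_subset_Ioc_self (hy.1 j trivial)
  rw [torusBox, integrableOn_univ_pi_succ_iff]
  refine not_integrable_prod_of_forall_not_integrable (U := U) ?_ fun y hy => ?_
  · rw [Measure.restrict_eq_self _ hUsub]
    exact (hUopen.measure_pos volume ⟨_, hUne⟩).ne'
  · show ¬ IntegrableOn (fun x => (latticeSymbol (N + 1) K (Fin.cons x y))⁻¹ ^ 2) (Ioc 0 (2 * π))
    simp_rw [latticeSymbol_cons]
    exact not_integrableOn_inv_sq_sub_cos hy.2 (by positivity)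

theorem memLp_inv_latticeSymbol_iff {n : ℕ} (hn : 0 < n) (hn4 : n ≤ 4) (K : ℝ) :
    MemLp (fun ξ => (latticeSymbol n K ξ)⁻¹) 2 (volume.restrict (torusBox n)) ↔ 2 < |K| := by
  refine ⟨fun h => ?_, memLp_inv_latticeSymbol_of_two_lt_abs⟩
  by_contra hK
  have hsq : IntegrableOn (fun ξ => (latticeSymbol n K ξ)⁻¹ ^ 2) (torusBox n) :=
    (memLp_two_iff_integrable_sq h.1).1 h
  rcases (not_lt.1 hK).lt_or_eq with hlt | heq
  · obtain ⟨N, rfl⟩ : ∃ N, n = N + 1 := Nat.exists_eq_succ_of_ne_zero hn.ne'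
    exact not_integrableOn_inv_latticeSymbol_sq_of_abs_lt_two N hlt hsq
  · rcases (abs_eq zero_le_two).1 heq with rfl | rfl
    · refine not_integrableOn_inv_latticeSymbol_sq_two_mul_cos hn hn4 sin_two_pi
        (by linarith [pi_pos]) le_rfl ?_
      rwa [cos_two_pi, mul_one]
    · refine not_integrableOn_inv_latticeSymbol_sq_two_mul_cos hn hn4 sin_pi le_rfl
        (by linarith [pi_pos]) ?_
      rwa [cos_pi, mul_neg_one]

theorem stmt12_general (n : ℕ) (hn1 : 1 ≤ n) (hn4 : n ≤ 4) (τ m ω : ℝ) :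
    MemLp (fun ξ : Fin n → ℝ =>
        ((2 + τ ^ 2 * m ^ 2) * Real.cos ω - (2 / n) * ∑ j, Real.cos (ξ j))⁻¹) 2
        (volume.restrict (Set.pi Set.univ fun _ : Fin n => Set.Ioc (0 : ℝ) (2 * Real.pi)))
      ↔ (1 + τ ^ 2 * m ^ 2 / 2)⁻¹ < |Real.cos ω| := by
  have hC : 0 < 2 + τ ^ 2 * m ^ 2 := by positivity
  have hgap : (1 + τ ^ 2 * m ^ 2 / 2)⁻¹ < |cos ω| ↔ 2 < |(2 + τ ^ 2 * m ^ 2) * cos ω| := by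
    rw [show 1 + τ ^ 2 * m ^ 2 / 2 = (2 + τ ^ 2 * m ^ 2) / 2 by ring, inv_div, abs_mul,
      abs_of_pos hC, div_lt_iff₀' hC]
  rw [hgap]
  exact memLp_inv_latticeSymbol_iff hn1 hn4 _

/-- For `1 ≤ n ≤ 4`, `ξ ↦ 1/a(ξ,ω)` with
`a(ξ,ω) = (2+τ²m²)cos ω − (2/n)Σ_j cos ξ_j` belongs to `L²(𝕋ⁿ)` if and only if
`ω` lies in the spectral gaps, i.e. `|cos ω| > (1+τ²m²/2)⁻¹`
(equivalently `ω ∈ (−ω_m, ω_m) ∪ (π−ω_m, π+ω_m)` with `ω_m = arccos((1+τ²m²/2)⁻¹)`). -/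
theorem stmt12 (n : ℕ) (hn1 : 1 ≤ n) (hn4 : n ≤ 4) (τ m ω : ℝ) (hτ : 0 < τ) (hm : 0 < m) :
    MemLp (fun ξ : Fin n → ℝ =>
        ((2 + τ ^ 2 * m ^ 2) * Real.cos ω - (2 / n) * ∑ j, Real.cos (ξ j))⁻¹) 2
        (volume.restrict (Set.pi Set.univ fun _ : Fin n => Set.Ioc (0 : ℝ) (2 * Real.pi)))
      ↔ (1 + τ ^ 2 * m ^ 2 / 2)⁻¹ < |Real.cos ω| :=
  stmt12_general n hn1 hn4 τ m ω
end

section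
/- Suppose τ/ε = 1/√n and ψ: ℤⁿ × ℤ → ℂ with ψ^T ∈ l²(ℤⁿ) for all T satisfies (ψ_X^{T+1}+ψ_X^{T−1})·(1 + τ² B_X(|ψ_X^{T+1}|², |ψ_X^{T−1}|²)) = (1/n) Σ_{j=1}^n (ψ_{X+e_j}^T + ψ_{X−e_j}^T) for all X, T, where each B_X(λ,μ) is real-valued. Then the discrete charge Q^T = (i/(4τ)) Σ_{X∈ℤⁿ} Σ_{j=1}^n εⁿ [ conj(ψ_{X+e_j}^T)ψ_X^{T+1} + conj(ψ_{X−e_j}^T)ψ_X^{T+1} − conj(ψ_X^{T+1})ψ_{X+e_j}^T − conj(ψ_X^{T+1})ψ_{X−e_j}^T ] satisfies Q^T = Q^{T−1} for all T ∈ ℤ. -/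
/-!
Write `S f X = Σ_j (f (X + e_j) + f (X - e_j))` and `⟨a, b⟩ = Σ_X conj (a X) * b X`. Up to the
factor `i εⁿ / (4τ)` the charge is `Q^T = ⟨S ψ^T, ψ^{T+1}⟩ - ⟨ψ^{T+1}, S ψ^T⟩`. Being a sum of
shifts and their inverses, `S` is symmetric on `l²(ℤⁿ)`, so `Q^T - Q^{T-1} = z - conj z` with
`z = ⟨S ψ^T, ψ^{T+1} + ψ^{T-1}⟩`. The scheme says `S ψ^T = r (ψ^{T+1} + ψ^{T-1})` with
`r = n (1 + τ² B)` real, hence `z = Σ_X r X |ψ_X^{T+1} + ψ_X^{T-1}|²` is real.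
-/

open ComplexConjugate Function

/-- The discrete charge
`Q^T = (i/(4τ)) Σ_X Σ_j εⁿ [ conj(ψ_{X+e_j}^T)ψ_X^{T+1} + conj(ψ_{X−e_j}^T)ψ_X^{T+1}
  − conj(ψ_X^{T+1})ψ_{X+e_j}^T − conj(ψ_X^{T+1})ψ_{X−e_j}^T ]`. -/
noncomputable def discreteCharge (n : ℕ) (τ ε : ℝ) (ψ : (Fin n → ℤ) → ℤ → ℂ)
    (T : ℤ) : ℂ :=
  (Complex.I / (4 * (τ : ℂ))) *
    ∑' X : Fin n → ℤ, ∑ j : Fin n, ((ε ^ n : ℝ) : ℂ) *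
      ((starRingEnd ℂ) (ψ (X + Pi.single j 1) T) * ψ X (T + 1)
        + (starRingEnd ℂ) (ψ (X - Pi.single j 1) T) * ψ X (T + 1)
        - (starRingEnd ℂ) (ψ X (T + 1)) * ψ (X + Pi.single j 1) T
        - (starRingEnd ℂ) (ψ X (T + 1)) * ψ (X - Pi.single j 1) T)

theorem Memℓp.comp_injective {α β E : Type*} [NormedAddCommGroup E]
    {p : ENNReal} (hp : 0 < p.toReal) {f : β → E} (hf : Memℓp f p) {σ : α → β}
    (hσ : Injective σ) : Memℓp (f ∘ σ) p :=
  (memℓp_gen_iff hp).2 (((memℓp_gen_iff hp).1 hf).comp_injective hσ)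

theorem memℓp_two_iff_summable_sq {α E : Type*} [NormedAddCommGroup E] {f : α → E} :
    Memℓp f 2 ↔ Summable fun x => ‖f x‖ ^ 2 := by
  rw [memℓp_gen_iff (by norm_num)]
  norm_num

theorem Memℓp.comp_add_right {G E : Type*} [AddGroup G] [NormedAddCommGroup E] {f : G → E}
    (hf : Memℓp f 2) (v : G) : Memℓp (fun x => f (x + v)) 2 :=
  hf.comp_injective (by norm_num) (add_left_injective v)

theorem Memℓp.comp_sub_right {G E : Type*} [AddGroup G] [NormedAddCommGroup E] {f : G → E}
    (hf : Memℓp f 2) (v : G) : Memℓp (fun x => f (x - v)) 2 :=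
  hf.comp_injective (by norm_num) sub_left_injective

section L2Pairing

variable {α : Type*}

noncomputable def l2Pairing (a b : α → ℂ) : ℂ :=
  ∑' x, conj (a x) * b x

theorem Memℓp.summable_conj_mul {a b : α → ℂ} (ha : Memℓp a 2) (hb : Memℓp b 2) :
    Summable fun x => conj (a x) * b x := by
  simpa [mul_comm] using lp.summable_inner (𝕜 := ℂ) (G := fun _ : α => ℂ) ⟨a, ha⟩ ⟨b, hb⟩

theorem conj_l2Pairing (a b : α → ℂ) : conj (l2Pairing a b) = l2Pairing b a := by
  simp only [l2Pairing, Complex.conj_tsum, map_mul, Complex.conj_conj, mul_comm]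

theorem l2Pairing_add_left {a a' b : α → ℂ} (ha : Memℓp a 2) (ha' : Memℓp a' 2)
    (hb : Memℓp b 2) :
    l2Pairing (fun x => a x + a' x) b = l2Pairing a b + l2Pairing a' b := by
  simp only [l2Pairing, map_add, add_mul]
  exact (ha.summable_conj_mul hb).tsum_add (ha'.summable_conj_mul hb)

theorem l2Pairing_add_right {a b b' : α → ℂ} (ha : Memℓp a 2) (hb : Memℓp b 2)
    (hb' : Memℓp b' 2) :
    l2Pairing a (fun x => b x + b' x) = l2Pairing a b + l2Pairing a b' := by
  simp only [l2Pairing, mul_add]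
  exact (ha.summable_conj_mul hb).tsum_add (ha.summable_conj_mul hb')

theorem l2Pairing_sum_left {ι : Type*} (s : Finset ι) {a : ι → α → ℂ} {b : α → ℂ}
    (ha : ∀ i ∈ s, Memℓp (a i) 2) (hb : Memℓp b 2) :
    l2Pairing (fun x => ∑ i ∈ s, a i x) b = ∑ i ∈ s, l2Pairing (a i) b := by
  simp only [l2Pairing, map_sum, Finset.sum_mul]
  exact Summable.tsum_finsetSum fun i hi => (ha i hi).summable_conj_mul hb

theorem l2Pairing_sum_right {ι : Type*} (s : Finset ι) {a : α → ℂ} {b : ι → α → ℂ}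
    (ha : Memℓp a 2) (hb : ∀ i ∈ s, Memℓp (b i) 2) :
    l2Pairing a (fun x => ∑ i ∈ s, b i x) = ∑ i ∈ s, l2Pairing a (b i) := by
  simp only [l2Pairing, Finset.mul_sum]
  exact Summable.tsum_finsetSum fun i hi => ha.summable_conj_mul (hb i hi)

theorem conj_l2Pairing_ofReal_mul_self (r : α → ℝ) (u : α → ℂ) :
    conj (l2Pairing (fun x => (r x : ℂ) * u x) u) = l2Pairing (fun x => (r x : ℂ) * u x) u := by
  rw [conj_l2Pairing]
  refine tsum_congr fun x => ?_
  simp only [map_mul, Complex.conj_ofReal]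
  ring

variable {G : Type*} [AddGroup G]

theorem l2Pairing_comp_add_right (a b : G → ℂ) (v : G) :
    l2Pairing (fun x => a (x + v)) b = l2Pairing a (fun x => b (x - v)) := by
  simpa [l2Pairing] using (Equiv.addRight v).tsum_eq fun x => conj (a x) * b (x - v)

theorem l2Pairing_comp_sub_right (a b : G → ℂ) (v : G) :
    l2Pairing (fun x => a (x - v)) b = l2Pairing a (fun x => b (x + v)) := by
  simpa [l2Pairing] using (Equiv.subRight v).tsum_eq fun x => conj (a x) * b (x + v)

end L2Pairing

section NeighborSum

variable {G ι : Type*} [AddGroup G] [Fintype ι] (e : ι → G)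

def neighborSum (f : G → ℂ) (x : G) : ℂ :=
  ∑ j, (f (x + e j) + f (x - e j))

theorem Memℓp.neighborSum {f : G → ℂ} (hf : Memℓp f 2) : Memℓp (neighborSum e f) 2 :=
  .finsetSum Finset.univ (f := fun j x => f (x + e j) + f (x - e j)) fun j _ =>
    (hf.comp_add_right (e j)).add (hf.comp_sub_right (e j))

theorem l2Pairing_neighborSum_left {a b : G → ℂ} (ha : Memℓp a 2) (hb : Memℓp b 2) :
    l2Pairing (neighborSum e a) b = l2Pairing a (neighborSum e b) := by
  have shifts {f : G → ℂ} (hf : Memℓp f 2) (j : ι) :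
      Memℓp (fun x => f (x + e j) + f (x - e j)) 2 :=
    (hf.comp_add_right (e j)).add (hf.comp_sub_right (e j))
  unfold neighborSum
  rw [l2Pairing_sum_left _ (a := fun j x => a (x + e j) + a (x - e j)) (fun j _ => shifts ha j) hb,
    l2Pairing_sum_right _ (b := fun j x => b (x + e j) + b (x - e j)) ha fun j _ => shifts hb j]
  refine Finset.sum_congr rfl fun j _ => ?_
  rw [l2Pairing_add_left (ha.comp_add_right _) (ha.comp_sub_right _) hb,
    l2Pairing_add_right ha (hb.comp_add_right _) (hb.comp_sub_right _),
    l2Pairing_comp_add_right, l2Pairing_comp_sub_right, add_comm]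

noncomputable def neighborCharge (f g : G → ℂ) : ℂ :=
  l2Pairing (neighborSum e f) g - l2Pairing g (neighborSum e f)

theorem neighborCharge_eq_of_neighborSum_eq {f g h : G → ℂ} (hf : Memℓp f 2) (hg : Memℓp g 2)
    (hh : Memℓp h 2) (r : G → ℝ) (hS : ∀ x, neighborSum e f x = r x * (g x + h x)) :
    neighborCharge e f g = neighborCharge e h f := by
  have hreal := conj_l2Pairing_ofReal_mul_self r fun x => g x + h x
  rw [← funext hS, l2Pairing_add_right (hf.neighborSum e) hg hh, map_add, conj_l2Pairing,
    conj_l2Pairing] at hreal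
  rw [neighborCharge, neighborCharge, l2Pairing_neighborSum_left e hh hf,
    ← l2Pairing_neighborSum_left e hf hh]
  linear_combination -hreal

theorem sum_conj_mul_sub_conj_mul_eq_neighborSum (f g : G → ℂ) (x : G) :
    ∑ j, (conj (f (x + e j)) * g x + conj (f (x - e j)) * g x
      - conj (g x) * f (x + e j) - conj (g x) * f (x - e j))
      = conj (neighborSum e f x) * g x - conj (g x) * neighborSum e f x := by
  simp only [neighborSum, map_sum, map_add, Finset.sum_mul, Finset.mul_sum,
    ← Finset.sum_sub_distrib]
  exact Finset.sum_congr rfl fun j _ => by ring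

end NeighborSum

theorem discreteCharge_eq_neighborCharge {n : ℕ} (τ ε : ℝ) {ψ : (Fin n → ℤ) → ℤ → ℂ} {T : ℤ}
    (hT : Memℓp (fun X => ψ X T) 2) (hT' : Memℓp (fun X => ψ X (T + 1)) 2) :
    discreteCharge n τ ε ψ T = Complex.I / (4 * τ) * (ε ^ n : ℝ)
      * neighborCharge (fun j => Pi.single j 1) (fun X => ψ X T) (fun X => ψ X (T + 1)) := by
  simp only [discreteCharge, ← Finset.mul_sum]
  rw [tsum_mul_left, mul_assoc, neighborCharge, l2Pairing, l2Pairing, ← Summable.tsum_sub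
    ((hT.neighborSum _).summable_conj_mul hT') (hT'.summable_conj_mul (hT.neighborSum _))]
  exact congrArg _ <| congrArg _ <| tsum_congr fun X =>
    sum_conj_mul_sub_conj_mul_eq_neighborSum _ (fun X => ψ X T) (fun X => ψ X (T + 1)) X

theorem stmt18_general (n : ℕ) (hn : 0 < n) (τ ε : ℝ)
    (B : (Fin n → ℤ) → ℝ → ℝ → ℝ)
    (ψ : (Fin n → ℤ) → ℤ → ℂ)
    (hl2 : ∀ T : ℤ, Summable fun X : Fin n → ℤ => ‖ψ X T‖ ^ 2)
    (heq : ∀ (X : Fin n → ℤ) (T : ℤ),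
      (ψ X (T + 1) + ψ X (T - 1)) *
        (1 + (τ : ℂ) ^ 2 * Complex.ofReal
          (B X (‖ψ X (T + 1)‖ ^ 2) (‖ψ X (T - 1)‖ ^ 2)))
      = (1 / (n : ℂ)) * ∑ j : Fin n,
          (ψ (X + Pi.single j 1) T + ψ (X - Pi.single j 1) T)) :
    ∀ T : ℤ, discreteCharge n τ ε ψ T = discreteCharge n τ ε ψ (T - 1) := by
  intro T
  have hψ : ∀ T, Memℓp (fun X => ψ X T) 2 := fun T => memℓp_two_iff_summable_sq.2 (hl2 T)
  have hS : ∀ X, neighborSum (fun j => Pi.single j 1) (fun X => ψ X T) X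
      = ((n * (1 + τ ^ 2 * B X (‖ψ X (T + 1)‖ ^ 2) (‖ψ X (T - 1)‖ ^ 2)) : ℝ) : ℂ)
        * (ψ X (T + 1) + ψ X (T - 1)) := by
    intro X
    have hn0 : (n : ℂ) ≠ 0 := by exact_mod_cast hn.ne'
    have h := heq X T
    field_simp at h
    rw [neighborSum, ← h]
    push_cast
    ring
  rw [discreteCharge_eq_neighborCharge τ ε (hψ T) (hψ (T + 1)),
    discreteCharge_eq_neighborCharge τ ε (hψ (T - 1)) (by simpa using hψ T), sub_add_cancel,
    neighborCharge_eq_of_neighborSum_eq _ (hψ T) (hψ (T + 1)) (hψ (T - 1)) _ hS]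

/-- Charge conservation for the Strauss–Vazquez scheme under the critical grid ratio
`τ/ε = 1/√n`: if `ψ^T ∈ l²(ℤⁿ)` satisfies
`(ψ_X^{T+1}+ψ_X^{T−1})(1 + τ² B_X(|ψ_X^{T+1}|², |ψ_X^{T−1}|²))
  = (1/n) Σ_j (ψ_{X+e_j}^T + ψ_{X−e_j}^T)` with `B_X` real-valued, then
`Q^T = Q^{T−1}` for all `T`. -/
theorem stmt18 (n : ℕ) (hn : 0 < n) (τ ε : ℝ) (hτ : 0 < τ)
    (hε : τ / ε = 1 / Real.sqrt n)
    (B : (Fin n → ℤ) → ℝ → ℝ → ℝ)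
    (ψ : (Fin n → ℤ) → ℤ → ℂ)
    (hl2 : ∀ T : ℤ, Summable fun X : Fin n → ℤ => ‖ψ X T‖ ^ 2)
    (heq : ∀ (X : Fin n → ℤ) (T : ℤ),
      (ψ X (T + 1) + ψ X (T - 1)) *
        (1 + (τ : ℂ) ^ 2 * Complex.ofReal
          (B X (‖ψ X (T + 1)‖ ^ 2) (‖ψ X (T - 1)‖ ^ 2)))
      = (1 / (n : ℂ)) * ∑ j : Fin n,
          (ψ (X + Pi.single j 1) T + ψ (X - Pi.single j 1) T)) :
    ∀ T : ℤ, discreteCharge n τ ε ψ T = discreteCharge n τ ε ψ (T - 1) :=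
  stmt18_general n hn τ ε B ψ hl2 heq
end
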